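/- arXiv:1703.03708 — 6 statements merged into one kernel-verified Lean document; each statement's English description precedes it below -/
import Mathlib

section
/- If x ∈ ℕⁿ is a solution of a₁x₁ + ⋯ + aₙxₙ ≡ 0 (mod m) with x₁ + ⋯ + xₙ ≥ m + 1, then x is decomposable: there exists a solution v with 0 < v < x (coordinatewise). -/
/-!
Read `x` as the multiset containing each index `i` exactly `xᵢ` times; it has at least `m + 1`
elements. Among the `m + 1` prefix sums of length `0, …, m` of the weights `aᵢ` along any
enumeration of it, two agree modulo `m`, so some nonempty block of at most `m` consecutive
elements has weight sum `≡ 0 (mod m)`. Its multiplicity vector `v` is the required solution: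
nonzero, and a proper part of `x` since it has fewer elements.
-/

open Finset

theorem List.exists_infix_ne_nil_sum_map_eq_zero {α G : Type*} [AddCommGroup G] [Fintype G]
    (f : α → G) (l : List α) (hl : Fintype.card G ≤ l.length) :
    ∃ t, t <:+: l ∧ t ≠ [] ∧ t.length ≤ Fintype.card G ∧ (t.map f).sum = 0 := by
  obtain ⟨i, j, hij, hprefix⟩ := Fintype.exists_ne_map_eq_of_card_lt
    (fun k : Fin (Fintype.card G + 1) => ((l.take k).map f).sum) (by simp)
  wlog hlt : i < j generalizing i j
  · exact this j i hij.symm hprefix.symm (lt_of_le_of_ne (not_lt.1 hlt) hij.symm)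
  have hj := j.is_lt
  refine ⟨(l.drop i).take (j - i), (take_prefix _ _).isInfix.trans (drop_suffix _ _).isInfix,
    ?_, ?_, ?_⟩
  · rw [← length_pos_iff, length_take, length_drop]
    omega
  · rw [length_take]
    omega
  · have hsplit : l.take j = l.take i ++ (l.drop i).take (j - i) := by
      rw [← take_add, Nat.add_sub_cancel' hlt.le]
    simpa [hsplit] using hprefix.symm

theorem Multiset.exists_le_ne_zero_sum_map_eq_zero {α G : Type*} [AddCommGroup G] [Fintype G]
    (f : α → G) (s : Multiset α) (hs : Fintype.card G ≤ card s) :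
    ∃ t ≤ s, t ≠ 0 ∧ card t ≤ Fintype.card G ∧ (t.map f).sum = 0 := by
  induction s using Quot.inductionOn with
  | h l =>
    obtain ⟨t, hinfix, hne, hlen, hsum⟩ := l.exists_infix_ne_nil_sum_map_eq_zero f hs
    exact ⟨t, coe_le.2 hinfix.sublist.subperm, by simpa using hne, hlen, by simpa using hsum⟩

theorem Multiset.sum_map_eq_sum_count_nsmul {ι M : Type*} [Fintype ι] [DecidableEq ι]
    [AddCommMonoid M] (t : Multiset ι) (f : ι → M) :
    (t.map f).sum = ∑ i, t.count i • f i := by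
  rw [Finset.sum_multiset_map_count]
  exact Finset.sum_subset (subset_univ _) fun i _ hi => by
    simp [count_eq_zero.2 (by simpa using hi)]

theorem stmt_0_general (n m : ℕ) (hm : 2 ≤ m) (a x : Fin n → ℕ)
    (hsum : m + 1 ≤ ∑ i, x i) :
    ∃ v : Fin n → ℕ, (∑ i, a i * v i) % m = 0 ∧ 0 < v ∧ v < x := by
  have : NeZero m := ⟨by omega⟩
  set s : Multiset (Fin n) := ∑ i, Multiset.replicate (x i) i
  have hcount : ∀ i, s.count i = x i := fun i => by
    simp [s, Multiset.count_sum', Multiset.count_replicate]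
  have hcard : ∀ t : Multiset (Fin n), ∑ i, t.count i = Multiset.card t := fun t =>
    Multiset.sum_count_eq_card fun i _ => mem_univ i
  obtain ⟨t, hts, ht0, htcard, htsum⟩ :=
    s.exists_le_ne_zero_sum_map_eq_zero (fun i => (a i : ZMod m)) (by
      rw [ZMod.card, ← hcard]
      simp only [hcount]
      omega)
  refine ⟨fun i => t.count i, ?_, ?_, ?_⟩
  · rw [t.sum_map_eq_sum_count_nsmul] at htsum
    apply Nat.mod_eq_zero_of_dvd
    rw [← ZMod.natCast_eq_zero_iff]
    simpa [mul_comm] using htsum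
  · obtain ⟨i, hi⟩ := Multiset.exists_mem_of_ne_zero ht0
    exact Pi.lt_def.2 ⟨fun _ => Nat.zero_le _, i, Multiset.count_pos.2 hi⟩
  · refine lt_of_le_of_ne (fun i => hcount i ▸ Multiset.count_le_of_le i hts) fun hvx => ?_
    have := congrArg (fun v : Fin n → ℕ => ∑ i, v i) hvx
    simp only [hcard, ZMod.card] at this htcard
    omega

/-- If `x ∈ ℕⁿ` solves `a₁x₁ + ⋯ + aₙxₙ ≡ 0 (mod m)` and `x₁ + ⋯ + xₙ ≥ m + 1`,
then `x` is decomposable: there is a solution `v` with `0 < v < x` coordinatewise. -/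
theorem stmt_0 (n m : ℕ) (hm : 2 ≤ m) (a x : Fin n → ℕ)
    (hx : (∑ i, a i * x i) % m = 0)
    (hsum : m + 1 ≤ ∑ i, x i) :
    ∃ v : Fin n → ℕ, (∑ i, a i * v i) % m = 0 ∧ 0 < v ∧ v < x :=
  stmt_0_general n m hm a x hsum
end

section
/- Every indecomposable solution x ∈ ℕⁿ of a₁x₁ + ⋯ + aₙxₙ ≡ 0 (mod m) satisfies x₁ + ⋯ + xₙ ≤ m. -/
/-!
Lay the coordinates of `x` end to end and cut the result after `t` units; this gives a chain
`0 = v₀ ≤ v₁ ≤ ⋯ ≤ x` with `|vₜ| = t` for `t ≤ |x|`. If `|x| > m`, two of the `m + 1` values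
`a · vₜ mod m` with `t ≤ m` coincide by pigeonhole, say at `p < q`, and then `v_q - v_p` is a
nonzero solution below `x` of size at most `m < |x|`, so `x` is not indecomposable. Only the
order of `ℤ/m` enters, so the argument runs in any finite abelian group.
-/

open Finset

namespace IndecomposableSolution

variable {n : ℕ}

def prefixSum (x : Fin n → ℕ) (k : ℕ) : ℕ := ∑ j with j.val < k, x j

lemma prefixSum_mono (x : Fin n → ℕ) : Monotone (prefixSum x) := fun _ _ hkl =>
  sum_le_sum_of_subset (monotone_filter_right _ fun _ _ hj => lt_of_lt_of_le hj hkl)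

lemma prefixSum_zero (x : Fin n → ℕ) : prefixSum x 0 = 0 := by
  simp [prefixSum]

lemma prefixSum_self (x : Fin n → ℕ) : prefixSum x n = ∑ i, x i := by
  simp [prefixSum]

lemma prefixSum_succ (x : Fin n → ℕ) (i : Fin n) : prefixSum x (i + 1) = prefixSum x i + x i := by
  simp only [prefixSum, Nat.lt_succ_iff_lt_or_eq, filter_or, Fin.val_inj]
  rw [sum_union]
  · simp [filter_eq']
  · exact disjoint_filter.2 fun j _ h => Fin.ne_of_lt h

def truncate (x : Fin n → ℕ) (t : ℕ) (i : Fin n) : ℕ :=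
  min t (prefixSum x (i + 1)) - min t (prefixSum x i)

lemma truncate_le (x : Fin n → ℕ) (t : ℕ) : truncate x t ≤ x := fun i => by
  have := prefixSum_succ x i
  simp only [truncate]
  omega

lemma truncate_mono (x : Fin n → ℕ) : Monotone (truncate x) := fun s t hst i => by
  have := prefixSum_succ x i
  simp only [truncate]
  omega

lemma sum_truncate (x : Fin n → ℕ) (t : ℕ) : ∑ i, truncate x t i = min t (∑ i, x i) := by
  simp only [truncate]
  rw [Fin.sum_univ_eq_sum_range (fun k => min t (prefixSum x (k + 1)) - min t (prefixSum x k)),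
    sum_range_tsub fun _ _ h => min_le_min_left t (prefixSum_mono x h), prefixSum_self,
    prefixSum_zero, _root_.min_zero, tsub_zero]

lemma exists_lt_le_card_map_eq {α : Type*} [Fintype α] (f : ℕ → α) :
    ∃ p q, p < q ∧ q ≤ Fintype.card α ∧ f p = f q := by
  obtain ⟨p, q, hne, heq⟩ :=
    Fintype.exists_ne_map_eq_of_card_lt (fun t : Fin (Fintype.card α + 1) => f t) (by simp)
  rcases Fin.lt_or_lt_of_ne hne with h | h
  · exact ⟨p, q, h, Nat.lt_succ_iff.1 q.2, heq⟩
  · exact ⟨q, p, h, Nat.lt_succ_iff.1 p.2, heq.symm⟩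

theorem exists_le_sum_le_card_sum_nsmul_eq_zero {G : Type*} [AddCommGroup G] [Fintype G]
    (a : Fin n → G) (x : Fin n → ℕ) (hx : Fintype.card G ≤ ∑ i, x i) :
    ∃ y ≤ x, y ≠ 0 ∧ ∑ i, y i ≤ Fintype.card G ∧ ∑ i, y i • a i = 0 := by
  obtain ⟨p, q, hpq, hqG, heq⟩ :=
    exists_lt_le_card_map_eq (α := G) fun t => ∑ i, truncate x t i • a i
  have hmono : truncate x p ≤ truncate x q := truncate_mono x hpq.le
  have hsum : ∑ i, (truncate x q - truncate x p) i = q - p := by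
    rw [Fintype.sum_congr _ _ fun i => Pi.sub_apply _ _ i, sum_tsub_distrib _ fun i _ => hmono i,
      sum_truncate, sum_truncate, min_eq_left (by omega), min_eq_left (by omega)]
  refine ⟨truncate x q - truncate x p, tsub_le_self.trans (truncate_le x q), ?_, by omega, ?_⟩
  · intro h
    simp only [h, Pi.zero_apply, sum_const_zero] at hsum
    omega
  · simp only [Pi.sub_apply, sub_nsmul _ (hmono _), sum_add_distrib, sum_neg_distrib, heq,
      add_neg_cancel]

end IndecomposableSolution

theorem stmt_1_general (n m : ℕ) (hm : 2 ≤ m) (a x : Fin n → ℕ)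
    (hmin : ∀ y : Fin n → ℕ, (∑ i, a i * y i) % m = 0 → y ≠ 0 → y ≤ x → y = x) :
    ∑ i, x i ≤ m := by
  by_contra! hxm
  have : NeZero m := ⟨by omega⟩
  obtain ⟨y, hyx, hy0, hym, hya⟩ :=
    IndecomposableSolution.exists_le_sum_le_card_sum_nsmul_eq_zero (fun i => (a i : ZMod m)) x
      (by rw [ZMod.card]; omega)
  have hsol : (∑ i, a i * y i) % m = 0 := by
    rw [← Nat.dvd_iff_mod_eq_zero, ← ZMod.natCast_eq_zero_iff, ← hya]
    push_cast
    simp only [nsmul_eq_mul, mul_comm]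
  rw [hmin y hsol hy0 hyx, ZMod.card] at hym
  omega

/-- Every indecomposable solution of `a₁x₁ + ⋯ + aₙxₙ ≡ 0 (mod m)` satisfies
`x₁ + ⋯ + xₙ ≤ m`. -/
theorem stmt_1 (n m : ℕ) (hm : 2 ≤ m) (a x : Fin n → ℕ)
    (hx : (∑ i, a i * x i) % m = 0) (hx0 : x ≠ 0)
    (hmin : ∀ y : Fin n → ℕ, (∑ i, a i * y i) % m = 0 → y ≠ 0 → y ≤ x → y = x) :
    ∑ i, x i ≤ m :=
  stmt_1_general n m hm a x hmin
end

section
/- Let Ω ⊆ ℤⁿ be a subgroup (lattice) of index at most m, and let r₁,…,rₙ ∈ ℕ with r₁ + ⋯ + rₙ = m. Then the box {x ∈ ℤⁿ : 0 ≤ xᵢ ≤ rᵢ for all i} contains a nonzero element of Ω. -/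
/-!
Walk from `0` to `r` through the box by filling the coordinates one after another, one unit per
step. The `m + 1` points of this staircase increase coordinatewise and have coordinate sums
`0, 1, …, m`, so two of them lie in the same coset of `Ω`; their difference is a nonzero element
of `Ω` in the box.
-/

def staircase : {n : ℕ} → (Fin n → ℕ) → ℕ → Fin n → ℕ
  | 0, _, _ => 0
  | _ + 1, r, k => Fin.cons (min (r 0) k) (staircase (Fin.tail r) (k - r 0))

theorem staircase_le {n : ℕ} (r : Fin n → ℕ) (k : ℕ) : staircase r k ≤ r := by
  induction n generalizing k with
  | zero => exact fun i => i.elim0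
  | succ n ih =>
    intro i
    refine Fin.cases (min_le_left _ _) (fun j => ?_) i
    simpa [staircase, Fin.tail] using ih (Fin.tail r) (k - r 0) j

theorem staircase_mono {n : ℕ} (r : Fin n → ℕ) : Monotone (staircase r) := by
  induction n with
  | zero => exact fun _ _ _ => le_rfl
  | succ n ih =>
    intro k l hkl i
    refine Fin.cases (min_le_min_left _ hkl) (fun j => ?_) i
    simpa [staircase] using ih (Fin.tail r) (Nat.sub_le_sub_right hkl _) j

theorem sum_staircase {n : ℕ} (r : Fin n → ℕ) (k : ℕ) :
    ∑ i, staircase r k i = min k (∑ i, r i) := by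
  induction n generalizing k with
  | zero => simp [staircase]
  | succ n ih =>
    simp only [Fin.sum_univ_succ, staircase, Fin.cons_zero, Fin.cons_succ, ih, Fin.tail]
    omega

theorem AddSubgroup.exists_lt_sub_mem_of_card_le {G : Type*} [AddCommGroup G] (H : AddSubgroup G)
    (hH : Nat.card (G ⧸ H) ≠ 0) (f : ℕ → G) {m : ℕ} (hm : Nat.card (G ⧸ H) ≤ m) :
    ∃ a b, a < b ∧ b ≤ m ∧ f b - f a ∈ H := by
  have : Finite (G ⧸ H) := (Nat.card_ne_zero.mp hH).2
  have := Fintype.ofFinite (G ⧸ H)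
  obtain ⟨a, b, hab, heq⟩ := Fintype.exists_ne_map_eq_of_card_lt
    (fun k : Fin (m + 1) => (f k : G ⧸ H))
    (by rw [Fintype.card_fin, ← Nat.card_eq_fintype_card]; omega)
  rcases Fin.lt_or_lt_of_ne hab with h | h
  · exact ⟨a, b, h, Nat.lt_succ_iff.mp b.isLt, QuotientAddGroup.eq_iff_sub_mem.mp heq.symm⟩
  · exact ⟨b, a, h, Nat.lt_succ_iff.mp a.isLt, QuotientAddGroup.eq_iff_sub_mem.mp heq⟩

theorem stmt_2_general (n m : ℕ) (Ω : AddSubgroup (Fin n → ℤ))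
    (hidx : Nat.card ((Fin n → ℤ) ⧸ Ω) ≤ m) (hfin : Nat.card ((Fin n → ℤ) ⧸ Ω) ≠ 0)
    (r : Fin n → ℕ) (hr : ∑ i, r i = m) :
    ∃ x : Fin n → ℤ, x ∈ Ω ∧ x ≠ 0 ∧ ∀ i, 0 ≤ x i ∧ x i ≤ (r i : ℤ) := by
  obtain ⟨a, b, hab, hbm, hmem⟩ :=
    Ω.exists_lt_sub_mem_of_card_le hfin (fun k i => (staircase r k i : ℤ)) hidx
  refine ⟨_, hmem, fun h => ?_, fun i => ?_⟩
  · have hstep : staircase r b = staircase r a := funext fun i => by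
      simpa [sub_eq_zero] using congrFun h i
    have hsum := congrArg (fun x => ∑ i, x i) hstep
    simp only [sum_staircase, hr] at hsum
    omega
  · have hmono : staircase r a i ≤ staircase r b i := staircase_mono r hab.le i
    have hle : staircase r b i ≤ r i := staircase_le r b i
    simp only [Pi.sub_apply]
    omega

/-- If `Ω ≤ ℤⁿ` has index at most `m` and `r₁ + ⋯ + rₙ = m` with `rᵢ ∈ ℕ`, then the box
`{x : 0 ≤ xᵢ ≤ rᵢ}` contains a nonzero element of `Ω`. -/
theorem stmt_2 (n m : ℕ) (hm : 2 ≤ m) (Ω : AddSubgroup (Fin n → ℤ))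
    (hidx : Nat.card ((Fin n → ℤ) ⧸ Ω) ≤ m) (hfin : Nat.card ((Fin n → ℤ) ⧸ Ω) ≠ 0)
    (r : Fin n → ℕ) (hr : ∑ i, r i = m) :
    ∃ x : Fin n → ℤ, x ∈ Ω ∧ x ≠ 0 ∧ ∀ i, 0 ≤ x i ∧ x i ≤ (r i : ℤ) :=
  stmt_2_general n m Ω hidx hfin r hr
end

section
/- For m ≥ 2 and a ∈ ℕⁿ, the number of indecomposable solutions of a₁x₁ + ⋯ + aₙxₙ ≡ 0 (mod m) is at most C(n+m−1, m), the binomial coefficient. -/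
/-!
Filling up `x` one unit at a time gives a chain `0 = c₀ < c₁ < ⋯` below `x`. If `∑ xᵢ > m`, two
of the vectors `c₀, …, c_m` have the same weighted sum mod `m`, and their difference is a
nonzero solution strictly below `x`; so every indecomposable solution has `∑ xᵢ ≤ m`.
Indecomposable solutions form an antichain, so two of them agreeing off one coordinate are equal.
Raising that coordinate until the total is `m` is therefore injective, and lands in the
`C(n + m - 1, m)` vectors of total `m` (stars and bars).
-/

open Finset

/-- For `G = ZMod m` these are the indecomposable solutions of `∑ aᵢ xᵢ ≡ 0 (mod m)`. -/
def IsIndecomposableSolution {ι G : Type*} [Fintype ι] [AddCommMonoid G] (a : ι → G)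
    (x : ι → ℕ) : Prop :=
  Minimal (fun y : ι → ℕ => ∑ i, y i • a i = 0 ∧ y ≠ 0) x

theorem exists_monotone_chain_le_sum_eq {ι : Type*} [Fintype ι] (x : ι → ℕ) :
    ∃ c : ℕ → ι → ℕ, Monotone c ∧ (∀ j, c j ≤ x) ∧ ∀ j ≤ ∑ i, x i, ∑ i, c j i = j := by
  classical
  have sum_count : ∀ L : List ι, ∑ i, L.count i = L.length := fun L => by
    simpa using Multiset.sum_count_eq_card (s := univ) (m := (L : Multiset ι)) (by simp)
  let l : List ι := (∑ i, x i • {i} : Multiset ι).toList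
  have hcount : ∀ i, l.count i = x i := fun i => by
    rw [← Multiset.coe_count, Multiset.coe_toList, Multiset.count_sum']
    simp [Multiset.count_singleton]
  refine ⟨fun j i => (l.take j).count i,
    fun j k hjk i => (List.take_sublist_take_left hjk).count_le i,
    fun j i => hcount i ▸ (List.take_sublist j l).count_le i, fun j hj => ?_⟩
  have hlen : l.length = ∑ i, x i := by simp only [← sum_count, hcount]
  simp only [sum_count, List.length_take]
  omega

theorem IsIndecomposableSolution.sum_le_card {ι G : Type*} [Fintype ι] [AddCommGroup G]
    [Finite G] {a : ι → G} {x : ι → ℕ} (hx : IsIndecomposableSolution a x) :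
    ∑ i, x i ≤ Nat.card G := by
  by_contra! hlt
  obtain ⟨c, hc_mono, hc_le, hc_sum⟩ := exists_monotone_chain_le_sum_eq x
  have : Fintype G := Fintype.ofFinite G
  obtain ⟨j, k, hjk, heq⟩ := Fintype.exists_ne_map_eq_of_card_lt
    (fun j : Fin (Nat.card G + 1) => ∑ i, c j i • a i) (by simp [Nat.card_eq_fintype_card])
  wlog hlt_jk : j < k generalizing j k
  · exact this k j hjk.symm heq.symm (lt_of_le_of_ne (not_lt.mp hlt_jk) hjk.symm)
  obtain ⟨y, hy⟩ : ∃ y, y + c j = c k := ⟨_, tsub_add_cancel_of_le (hc_mono hlt_jk.le)⟩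
  have hy_sum : ∑ i, y i + j = k := by
    rw [← hc_sum j (by omega), ← hc_sum k (by omega), ← sum_add_distrib, ← hy]
    rfl
  have hy_zero : ∑ i, y i • a i = 0 := by
    refine add_eq_right.mp (Eq.trans ?_ heq.symm)
    rw [← sum_add_distrib, ← hy]
    simp only [Pi.add_apply, add_smul]
  have hy_ne : y ≠ 0 := by
    rintro rfl
    simp only [Pi.zero_apply, sum_const_zero, zero_add, Fin.val_inj] at hy_sum
    exact hjk hy_sum
  have hy_eq := hx.eq_of_le ⟨hy_zero, hy_ne⟩ ((hy ▸ le_self_add).trans (hc_le k))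
  rw [hy_eq] at hy_sum
  omega

theorem IsAntichain.ncard_le_choose_of_sum_le {ι : Type*} [Fintype ι] [Nonempty ι]
    {S : Set (ι → ℕ)} (hS : IsAntichain (· ≤ ·) S) {m : ℕ} (hsum : ∀ x ∈ S, ∑ i, x i ≤ m) :
    S.ncard ≤ (Fintype.card ι + m - 1).choose m := by
  classical
  obtain ⟨i₀⟩ := ‹Nonempty ι›
  let top_up : (ι → ℕ) → ι → ℕ := fun x => x + Pi.single i₀ (m - ∑ i, x i)
  have hmaps : ∀ x ∈ S, top_up x ∈ {z : ι → ℕ | ∑ i, z i = m} := fun x hx => by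
    have := hsum x hx
    simp only [top_up, Set.mem_ofPred_eq, Pi.add_apply, sum_add_distrib, sum_pi_single',
      mem_univ, ↓reduceIte]
    omega
  have le_of_eq_off : ∀ x x' : ι → ℕ, (∀ i ≠ i₀, x i = x' i) → x i₀ ≤ x' i₀ → x ≤ x' :=
    fun x x' h_off h₀ i => by
      by_cases hi : i = i₀
      · exact hi ▸ h₀
      · exact (h_off i hi).le
  have hinj : Set.InjOn top_up S := by
    intro x hx x' hx' h
    have h_off : ∀ i ≠ i₀, x i = x' i := fun i hi => by
      simpa [top_up, Pi.single_eq_of_ne hi] using congrFun h i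
    rcases le_total (x i₀) (x' i₀) with h₀ | h₀
    · exact hS.eq hx hx' (le_of_eq_off x x' h_off h₀)
    · exact (hS.eq hx' hx (le_of_eq_off x' x (fun i hi => (h_off i hi).symm) h₀)).symm
  have : Finite {z : ι → ℕ | ∑ i, z i = m} := Finite.of_equiv _ (Sym.equivNatSumOfFintype ι m)
  calc S.ncard ≤ {z : ι → ℕ | ∑ i, z i = m}.ncard := Set.ncard_le_ncard_of_injOn top_up hmaps hinj
    _ = Nat.card (Sym ι m) := by
      rw [← Nat.card_coe_set_eq]
      exact Nat.card_congr (Sym.equivNatSumOfFintype ι m).symm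
    _ = _ := by rw [Nat.card_eq_fintype_card, Sym.card_sym_eq_choose]

theorem ncard_setOf_isIndecomposableSolution_le {ι G : Type*} [Fintype ι] [AddCommGroup G]
    [Finite G] (a : ι → G) :
    {x | IsIndecomposableSolution a x}.ncard ≤
      (Fintype.card ι + Nat.card G - 1).choose (Nat.card G) := by
  rcases isEmpty_or_nonempty ι with hι | hι
  · have : {x | IsIndecomposableSolution a x} = ∅ :=
      Set.eq_empty_of_forall_notMem fun x (hx : IsIndecomposableSolution a x) =>
        hx.prop.2 (Subsingleton.elim _ _)
    simp [this]
  · exact (setOfPred_minimal_antichain _).ncard_le_choose_of_sum_le fun _ hx =>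
      IsIndecomposableSolution.sum_le_card hx

/-- The number of indecomposable solutions of `a₁x₁ + ⋯ + aₙxₙ ≡ 0 (mod m)`
is at most `C(n+m−1, m)`. -/
theorem stmt_3 (n m : ℕ) (hm : 2 ≤ m) (a : Fin n → ℕ) :
    {x : Fin n → ℕ | (∑ i, a i * x i) % m = 0 ∧ x ≠ 0 ∧
      ∀ y : Fin n → ℕ, (∑ i, a i * y i) % m = 0 → y ≠ 0 → y ≤ x → y = x}.ncard
      ≤ Nat.choose (n + m - 1) m := by
  have : NeZero m := ⟨by omega⟩
  have hsol : ∀ y : Fin n → ℕ, (∑ i, a i * y i) % m = 0 ↔ ∑ i, y i • (a i : ZMod m) = 0 := by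
    intro y
    rw [← Nat.dvd_iff_mod_eq_zero, ← ZMod.natCast_eq_zero_iff]
    simp [mul_comm]
  have hset : {x : Fin n → ℕ | (∑ i, a i * x i) % m = 0 ∧ x ≠ 0 ∧
      ∀ y : Fin n → ℕ, (∑ i, a i * y i) % m = 0 → y ≠ 0 → y ≤ x → y = x} =
      {x | IsIndecomposableSolution (fun i => (a i : ZMod m)) x} := by
    ext x
    simp only [Set.mem_ofPred_eq, IsIndecomposableSolution, minimal_iff, hsol, and_imp,
      and_assoc, eq_comm]
  simpa [hset] using ncard_setOf_isIndecomposableSolution_le (fun i => (a i : ZMod m))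
end

section
/- Let m ≥ 4 and let x ∈ ℕ^{m−1} be an indecomposable solution of the standard linear congruence 1·x₁ + 2·x₂ + ⋯ + (m−1)·x_{m−1} ≡ 0 (mod m). If the support of x has at least s elements, then x₁ + ⋯ + x_{m−1} ≤ m − s + 1. -/
/-!
Encode `x` as the sequence over `ℤ/m` in which the residue `i` occurs `xᵢ` times. For a zero-sum
free sequence `T` over a cyclic group, the set of subsums (empty sum included) has at least
`|T| + σ(T)` elements. Removing one copy of a repeated term loses a subsum, for otherwise the
subsums would be closed under adding that term and hence contain its negative. For distinct terms
`g₁, …, gₙ` with sum `S` and zero-sum free proper subsequences, the subsums `gⱼ` and `S - gⱼ` avoid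
`0` and `S` and coincide at most twice: `gⱼ = S - gₖ` with `j ≠ k` gives a zero-sum proper
subsequence, and `2t = S` has at most two solutions in a cyclic group. For the minimal zero-sum
sequence `x`, drop one copy of a repeated term (keeping the width) or, if there is none, apply the
bound for distinct terms with `S = 0`; all subsums lie in `ℤ/m`, so `‖x‖₁ + σ(x) ≤ m + 1`.
-/

open Finset Function

theorem Finset.neg_mem_of_forall_add_mem {G : Type*} [AddGroup G] [DecidableEq G] {S : Finset G}
    {a : G} (h0 : 0 ∈ S) (h : ∀ w ∈ S, w + a ∈ S) : -a ∈ S := by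
  have hS : S.image (· + a) = S := eq_of_subset_of_card_le (image_subset_iff.2 h)
    (card_image_of_injective _ (add_left_injective a)).ge
  obtain ⟨w, hw, hwa⟩ := mem_image.1 (hS.symm ▸ h0)
  rwa [← eq_neg_of_add_eq_zero_left hwa]

theorem IsAddCyclic.card_filter_two_nsmul_eq_le {G : Type*} [AddCommGroup G] [DecidableEq G]
    [Fintype G] [IsAddCyclic G] (s : G) : #{t | 2 • t = s} ≤ 2 := by
  obtain h | ⟨t₀, ht₀⟩ := (filter (fun t : G => 2 • t = s) univ).eq_empty_or_nonempty
  · simp [h]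
  calc #{t | 2 • t = s}
      ≤ #{u : G | 2 • u = 0} :=
        card_le_card_of_injOn (· - t₀) (fun t ht => by simp_all [nsmul_sub])
          sub_left_injective.injOn
    _ ≤ 2 := IsAddCyclic.card_nsmul_eq_zero_le two_pos

theorem Pi.single_one_le_of_ne_zero {ι : Type*} [DecidableEq ι] {y : ι → ℕ} {j : ι}
    (hj : y j ≠ 0) : Pi.single j 1 ≤ y := by
  intro i
  obtain rfl | h := eq_or_ne i j
  · simp; omega
  · simp [h]

section ZeroSum

variable {ι G : Type*} [Fintype ι] [AddCommGroup G]

/-- A multiplicity vector `y : ι → ℕ` stands for the sequence over `G` in which `v i` occurs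
`y i` times; `seqSum v y` is its sum and `subsums v y` the set of sums of its subsequences. -/
def seqSum (v : ι → G) (y : ι → ℕ) : G :=
  ∑ i, y i • v i

def subsums [DecidableEq ι] [DecidableEq G] (v : ι → G) (y : ι → ℕ) : Finset G :=
  (Iic y).image (seqSum v)

def ZeroSumFree (v : ι → G) (y : ι → ℕ) : Prop :=
  ∀ z ≤ y, z ≠ 0 → seqSum v z ≠ 0

def width (y : ι → ℕ) : ℕ :=
  #{i | y i ≠ 0}

variable {v : ι → G} {y z : ι → ℕ}

theorem seqSum_add (y z : ι → ℕ) : seqSum v (y + z) = seqSum v y + seqSum v z := by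
  simp [seqSum, add_nsmul, sum_add_distrib]

theorem seqSum_tsub (h : z ≤ y) : seqSum v (y - z) = seqSum v y - seqSum v z := by
  rw [eq_sub_iff_add_eq, ← seqSum_add, tsub_add_cancel_of_le h]

theorem sum_tsub_of_le (h : z ≤ y) : ∑ i, (y - z) i = ∑ i, y i - ∑ i, z i :=
  sum_tsub_distrib _ fun i _ => h i

theorem width_eq_sum_of_le_one (hy : ∀ i, y i ≤ 1) : width y = ∑ i, y i := by
  rw [width, card_filter]
  exact sum_congr rfl fun i _ => by have := hy i; split_ifs <;> omega

theorem ZeroSumFree.mono (hy : ZeroSumFree v y) (h : z ≤ y) : ZeroSumFree v z :=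
  fun w hw => hy w (hw.trans h)

theorem seqSum_ne_zero_of_lt_sum (hmin : ∀ z ≤ y, z ≠ 0 → seqSum v z = 0 → z = y)
    (hz : z ≤ y) (hpos : 0 < ∑ i, z i) (hlt : ∑ i, z i < ∑ i, y i) : seqSum v z ≠ 0 := fun h => by
  have hzy := hmin z hz (by rintro rfl; simp at hpos) h
  exact hlt.ne (by rw [hzy])

variable [DecidableEq ι]

theorem seqSum_single (j : ι) : seqSum v (Pi.single j 1) = v j := by
  simp [seqSum, Pi.single_apply]

theorem sum_tsub_single_add_one {j : ι} (hj : y j ≠ 0) :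
    ∑ i, (y - Pi.single j 1 : ι → ℕ) i + 1 = ∑ i, y i := by
  rw [sum_tsub_of_le (Pi.single_one_le_of_ne_zero hj)]
  simp only [Pi.single_apply, sum_ite_eq', mem_univ, if_true]
  have := single_le_sum (fun i _ => Nat.zero_le (y i)) (mem_univ j)
  omega

theorem width_tsub_single {j : ι} (hj : 2 ≤ y j) : width (y - Pi.single j 1) = width y := by
  refine congrArg card (filter_congr fun i _ => ?_)
  obtain rfl | h := eq_or_ne i j
  · simp; omega
  · simp [h]

theorem two_nsmul_eq_seqSum_of_eq_sub (hmin : ∀ z ≤ y, z ≠ 0 → seqSum v z = 0 → z = y)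
    (h3 : 3 ≤ ∑ i, y i) {j k : ι} (hj : y j ≠ 0) (hk : y k ≠ 0)
    (h : v j = seqSum v y - v k) : 2 • v j = seqSum v y := by
  obtain rfl | hjk := eq_or_ne j k
  · rw [two_nsmul]
    nth_rw 2 [h]
    abel
  set pair : ι → ℕ := Pi.single j 1 + Pi.single k 1
  have hpair : pair ≤ y := fun i => by
    obtain rfl | hij := eq_or_ne i j
    · simp [pair, hjk]; omega
    obtain rfl | hik := eq_or_ne i k
    · simp [pair, hij]; omega
    · simp [pair, hij, hik]
  have hsum : ∑ i, pair i = 2 := by simp [pair, sum_add_distrib]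
  refine absurd ?_ (seqSum_ne_zero_of_lt_sum hmin (tsub_le_self : y - pair ≤ y) ?_ ?_)
  · rw [seqSum_tsub hpair, seqSum_add, seqSum_single, seqSum_single, h]
    abel
  all_goals rw [sum_tsub_of_le hpair]; omega

variable [DecidableEq G]

theorem mem_subsums {t : G} : t ∈ subsums v y ↔ ∃ z ≤ y, seqSum v z = t := by
  simp [subsums]

theorem seqSum_mem_subsums (h : z ≤ y) : seqSum v z ∈ subsums v y :=
  mem_subsums.2 ⟨z, h, rfl⟩

theorem zero_mem_subsums : (0 : G) ∈ subsums v y := by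
  simpa [seqSum] using seqSum_mem_subsums (v := v) fun _ => Nat.zero_le _

theorem subsums_mono (h : z ≤ y) : subsums v z ⊆ subsums v y :=
  image_subset_image (Iic_subset_Iic.2 h)

theorem card_subsums_lt_of_zeroSumFree (j : ι) (hy : ZeroSumFree v (y + Pi.single j 1)) :
    #(subsums v y) < #(subsums v (y + Pi.single j 1)) := by
  refine card_lt_card ((ssubset_iff_of_subset (subsums_mono le_self_add)).2 ?_)
  suffices ∃ w ∈ subsums v y, w + v j ∉ subsums v y by
    obtain ⟨w, hw, hwj⟩ := this
    obtain ⟨z, hz, rfl⟩ := mem_subsums.1 hw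
    refine ⟨_, ?_, hwj⟩
    rw [← seqSum_single (v := v) j, ← seqSum_add]
    exact seqSum_mem_subsums (add_le_add hz le_rfl)
  by_contra! hclosed
  obtain ⟨z, hz, hzj⟩ := mem_subsums.1 (neg_mem_of_forall_add_mem zero_mem_subsums hclosed)
  refine hy (z + Pi.single j 1) (add_le_add hz le_rfl) (fun h => ?_) (by
    rw [seqSum_add, seqSum_single, hzj, neg_add_cancel])
  simpa using congrFun h j

theorem mem_subsums_sdiff_of_ne_zero (hmin : ∀ z ≤ y, z ≠ 0 → seqSum v z = 0 → z = y)
    (hn : 2 ≤ ∑ i, y i) {j : ι} (hj : y j ≠ 0) :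
    v j ∈ subsums v y \ {0, seqSum v y} ∧
      seqSum v y - v j ∈ subsums v y \ {0, seqSum v y} := by
  have hle := Pi.single_one_le_of_ne_zero hj
  have hsum := sum_tsub_single_add_one hj
  have hv0 : v j ≠ 0 := by
    simpa [seqSum_single] using seqSum_ne_zero_of_lt_sum hmin hle (by simp) (by simp; omega)
  have hvs : seqSum v y - v j ≠ 0 := by
    rw [← seqSum_single (v := v) j, ← seqSum_tsub hle]
    exact seqSum_ne_zero_of_lt_sum hmin tsub_le_self (by omega) (by omega)
  simp only [mem_sdiff, mem_insert, mem_singleton, sub_eq_self, not_or]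
  refine ⟨⟨?_, hv0, fun h => hvs (by rw [h, sub_self])⟩, ⟨?_, hvs, hv0⟩⟩
  · rw [← seqSum_single (v := v) j]
    exact seqSum_mem_subsums hle
  · rw [← seqSum_single (v := v) j, ← seqSum_tsub hle]
    exact seqSum_mem_subsums tsub_le_self

variable [Fintype G] [IsAddCyclic G]

theorem two_mul_sum_add_card_pair_le (hv : Injective v) (hy : ∀ i, y i ≤ 1)
    (hmin : ∀ z ≤ y, z ≠ 0 → seqSum v z = 0 → z = y) :
    2 * ∑ i, y i + #{0, seqSum v y} ≤ #(subsums v y) + 2 := by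
  set s := seqSum v y
  set n := ∑ i, y i
  have hpair : #{0, s} ≤ 2 := card_le_two
  have hsplit := card_sdiff_add_card_eq_card (s := {0, s}) (t := subsums v y)
    (insert_subset zero_mem_subsums (singleton_subset_iff.2 (seqSum_mem_subsums le_rfl)))
  obtain hn | hn : n ≤ 1 ∨ 2 ≤ n := by omega
  · omega
  set D := ({i | y i ≠ 0} : Finset ι).image v
  set E := D.image (s - ·)
  have hD : #D = n := (card_image_of_injective _ hv).trans (width_eq_sum_of_le_one hy)
  have hE : #E = n := by rw [card_image_of_injective _ sub_right_injective, hD]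
  have hDE : D ∪ E ⊆ subsums v y \ {0, s} := by
    intro t ht
    simp only [D, E, mem_union, mem_image, mem_filter, mem_univ, true_and] at ht
    obtain ⟨j, hj, rfl⟩ | ⟨_, ⟨j, hj, rfl⟩, rfl⟩ := ht
    exacts [(mem_subsums_sdiff_of_ne_zero hmin hn hj).1,
      (mem_subsums_sdiff_of_ne_zero hmin hn hj).2]
  have hinter : #(D ∩ E) ≤ 2 := by
    obtain hn2 | hn3 : n = 2 ∨ 3 ≤ n := by omega
    · exact (card_le_card inter_subset_left).trans (by omega)
    refine (card_le_card fun t ht => ?_).trans (IsAddCyclic.card_filter_two_nsmul_eq_le s)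
    simp only [D, E, mem_inter, mem_image, mem_filter, mem_univ, true_and] at ht
    obtain ⟨⟨j, hj, rfl⟩, ⟨_, ⟨k, hk, rfl⟩, hjk⟩⟩ := ht
    simpa using two_nsmul_eq_seqSum_of_eq_sub hmin hn3 hj hk hjk.symm
  have := card_union_add_card_inter D E
  have := card_le_card hDE
  omega

theorem length_add_width_le_card_subsums (hv : Injective v) (hy : ZeroSumFree v y) :
    ∑ i, y i + width y ≤ #(subsums v y) := by
  obtain ⟨n, hn⟩ : ∃ n, ∑ i, y i = n := ⟨_, rfl⟩
  induction n using Nat.strong_induction_on generalizing y with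
  | _ n ih =>
  by_cases hsq : ∀ i, y i ≤ 1
  · have key := two_mul_sum_add_card_pair_le hv hsq fun z hz hz0 h => absurd h (hy z hz hz0)
    rw [width_eq_sum_of_le_one hsq]
    obtain rfl | hy0 := eq_or_ne y 0
    · simp
    · rw [card_pair (hy y le_rfl hy0).symm] at key
      omega
  push Not at hsq
  obtain ⟨j, hj⟩ := hsq
  have hle : Pi.single j 1 ≤ y := Pi.single_one_le_of_ne_zero (by omega)
  have hlt := card_subsums_lt_of_zeroSumFree (v := v) (y := y - Pi.single j 1) j
    (by rwa [tsub_add_cancel_of_le hle])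
  rw [tsub_add_cancel_of_le hle] at hlt
  have hsum := sum_tsub_single_add_one (y := y) (j := j) (by omega)
  have := ih _ (by omega) (hy.mono (tsub_le_self : y - Pi.single j 1 ≤ y)) rfl
  rw [width_tsub_single hj] at this
  omega

theorem length_add_width_le_card_subsums_add_one (hv : Injective v) (hx : seqSum v y = 0)
    (hmin : ∀ z ≤ y, z ≠ 0 → seqSum v z = 0 → z = y) :
    ∑ i, y i + width y ≤ #(subsums v y) + 1 := by
  by_cases hsq : ∀ i, y i ≤ 1
  · have key := two_mul_sum_add_card_pair_le hv hsq hmin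
    rw [hx, pair_eq_singleton, card_singleton] at key
    rw [width_eq_sum_of_le_one hsq]
    omega
  push Not at hsq
  obtain ⟨j, hj⟩ := hsq
  have hfree : ZeroSumFree v (y - Pi.single j 1) := fun z hz hz0 h => by
    have := hmin z (hz.trans tsub_le_self) hz0 h ▸ hz j
    simp at this
    omega
  have := length_add_width_le_card_subsums hv hfree
  rw [width_tsub_single hj] at this
  have := card_le_card (subsums_mono (v := v) (tsub_le_self : y - Pi.single j 1 ≤ y))
  have := sum_tsub_single_add_one (y := y) (j := j) (by omega)
  omega

end ZeroSum

def standardCoeff (m : ℕ) (i : Fin (m - 1)) : ZMod m :=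
  ((i + 1 : ℕ) : ZMod m)

theorem seqSum_standardCoeff_eq_zero_iff {m : ℕ} (y : Fin (m - 1) → ℕ) :
    seqSum (standardCoeff m) y = 0 ↔ (∑ i : Fin (m - 1), ((i : ℕ) + 1) * y i) % m = 0 := by
  rw [← Nat.dvd_iff_mod_eq_zero, ← ZMod.natCast_eq_zero_iff, seqSum]
  simp only [standardCoeff, nsmul_eq_mul, Nat.cast_sum, Nat.cast_mul, mul_comm]

theorem standardCoeff_injective (m : ℕ) : Injective (standardCoeff m) := fun i j h => by
  have hi := i.2
  have hj := j.2
  have := (ZMod.natCast_eq_natCast_iff' _ _ m).1 h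
  rw [Nat.mod_eq_of_lt (by omega), Nat.mod_eq_of_lt (by omega)] at this
  exact Fin.ext (by omega)

theorem stmt_6_general (m : ℕ) (x : Fin (m - 1) → ℕ)
    (hx : (∑ i : Fin (m - 1), ((i : ℕ) + 1) * x i) % m = 0) (hx0 : x ≠ 0)
    (hmin : ∀ y : Fin (m - 1) → ℕ,
      (∑ i : Fin (m - 1), ((i : ℕ) + 1) * y i) % m = 0 → y ≠ 0 → y ≤ x → y = x)
    (s : ℕ) (hs : s ≤ (Finset.univ.filter (fun i => x i ≠ 0)).card) :
    ∑ i, x i ≤ m - s + 1 := by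
  obtain ⟨i, -⟩ := Function.ne_iff.1 hx0
  have : NeZero m := ⟨by have := i.2; omega⟩
  have hbound := length_add_width_le_card_subsums_add_one (standardCoeff_injective m)
    ((seqSum_standardCoeff_eq_zero_iff x).2 hx)
    fun z hz hz0 h => hmin z ((seqSum_standardCoeff_eq_zero_iff z).1 h) hz0 hz
  have hcard := (card_le_univ (subsums (standardCoeff m) x)).trans_eq (ZMod.card m)
  rw [width] at hbound
  omega

/-- Lemma on supports: if an indecomposable solution of the standard congruence `(C_m)`,
`m ≥ 4`, has width at least `s`, then its length is at most `m − s + 1`. -/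
theorem stmt_6 (m : ℕ) (hm : 4 ≤ m) (x : Fin (m - 1) → ℕ)
    (hx : (∑ i : Fin (m - 1), ((i : ℕ) + 1) * x i) % m = 0) (hx0 : x ≠ 0)
    (hmin : ∀ y : Fin (m - 1) → ℕ,
      (∑ i : Fin (m - 1), ((i : ℕ) + 1) * y i) % m = 0 → y ≠ 0 → y ≤ x → y = x)
    (s : ℕ) (hs : s ≤ (Finset.univ.filter (fun i => x i ≠ 0)).card) :
    ∑ i, x i ≤ m - s + 1 :=
  stmt_6_general m x hx hx0 hmin s hs
end

section
/- If T ⊆ {1,…,m−1} is admissible, then #T ≤ m/2. -/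
/-!
Two distinct elements of an admissible set cannot sum to `m`, so the folding
`t ↦ min t (m - t)`, which identifies `t` with `m - t`, is injective on `T` and maps it
into `{1, …, ⌊m/2⌋}`.
-/

open Finset

def Admissible (m : ℕ) (T : Finset ℕ) : Prop :=
  ∀ U ⊆ T, U.Nonempty → ¬ m ∣ U.sum id

theorem Admissible.not_dvd_add {m : ℕ} {T : Finset ℕ} (hT : Admissible m T) {a b : ℕ}
    (ha : a ∈ T) (hb : b ∈ T) (hab : a ≠ b) : ¬ m ∣ a + b := by
  have hpair : ({a, b} : Finset ℕ) ⊆ T := insert_subset ha (singleton_subset_iff.2 hb)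
  simpa [sum_pair hab] using hT _ hpair (insert_nonempty a {b})

theorem two_mul_card_le_of_add_ne {m : ℕ} {T : Finset ℕ} (hsub : T ⊆ Icc 1 (m - 1))
    (hT : ∀ a ∈ T, ∀ b ∈ T, a ≠ b → a + b ≠ m) : 2 * #T ≤ m := by
  have hcard : #T ≤ #(Icc 1 (m / 2)) := by
    refine card_le_card_of_injOn (fun t => min t (m - t)) (fun t ht => ?_)
      fun a ha b hb hfold => ?_
    · have := mem_Icc.1 (hsub ht)
      simp only [coe_Icc, Set.mem_Icc]
      omega
    · by_contra hab
      have := hT a ha b hb hab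
      have := mem_Icc.1 (hsub ha)
      have := mem_Icc.1 (hsub hb)
      simp only at hfold
      omega
  rw [Nat.card_Icc] at hcard
  omega

theorem stmt_14_general (m : ℕ) (T : Finset ℕ)
    (hsub : T ⊆ Finset.Icc 1 (m - 1))
    (hadm : ∀ U ⊆ T, U.Nonempty → ¬ m ∣ U.sum id) :
    2 * T.card ≤ m :=
  two_mul_card_le_of_add_ne hsub fun _ ha _ hb hab hsum =>
    Admissible.not_dvd_add hadm ha hb hab (hsum ▸ dvd_refl m)

/-- If `T ⊆ {1,…,m−1}` is admissible (no nonempty subset sum divisible by `m`, `m ≥ 2`),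
then `#T ≤ m/2`. -/
theorem stmt_14 (m : ℕ) (hm : 2 ≤ m) (T : Finset ℕ)
    (hsub : T ⊆ Finset.Icc 1 (m - 1))
    (hadm : ∀ U ⊆ T, U.Nonempty → ¬ m ∣ U.sum id) :
    2 * T.card ≤ m :=
  stmt_14_general m T hsub hadm
end
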